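/- arXiv:1810.08633 — 3 statements merged into one kernel-verified Lean document; each statement's English description precedes it below -/
import Mathlib

section
/- If f : ℝⁿ₊ → ℝ₊ satisfies c₁‖p‖ ≤ f(p) for some c₁ > 0 and all p, then Bf is Lipschitz continuous: |(Bf)(p) − (Bf)(p')| ≤ c₁⁻¹‖p − p'‖ for all p, p' ∈ ℝⁿ₊. -/
open Finset

noncomputable def inn {n : ℕ} (p q : Fin n → ℝ) : ℝ := ∑ i, p i * q i

noncomputable def nrm {n : ℕ} (p : Fin n → ℝ) : ℝ := Real.sqrt (∑ i, (p i)^2)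

def Orth (n : ℕ) : Set (Fin n → ℝ) := {p | ∀ i, 0 ≤ p i}

noncomputable def B {n : ℕ} (f : (Fin n → ℝ) → ℝ) (p : Fin n → ℝ) : ℝ :=
  sSup {x | ∃ q ∈ Orth n, q ≠ 0 ∧ x = inn p q / f q}

def MemO {n : ℕ} (f : (Fin n → ℝ) → ℝ) : Prop :=
  (∀ p ∈ Orth n, ∀ l : ℝ, 0 < l → f (l • p) = l * f p) ∧
  (∀ p ∈ Orth n, p ≠ 0 → 0 < f p) ∧
  (∃ c₁ c₂ : ℝ, 0 < c₁ ∧ 0 < c₂ ∧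
    ∀ p ∈ Orth n, c₁ * nrm p ≤ f p ∧ f p ≤ c₂ * nrm p) ∧
  ContinuousOn f (Orth n)

def PositiveConvex {n : ℕ} (C : Set (Fin n → ℝ)) : Prop :=
  Convex ℝ C ∧ ∀ p₀ ∈ Orth n, p₀ ∉ C → ∃ q ∈ Orth n, ∃ γ : ℝ, 0 < γ ∧
    γ ≤ inn p₀ q ∧ ∀ p ∈ C, inn p q < γ

lemma nrm_nonneg {n : ℕ} (p : Fin n → ℝ) : 0 ≤ nrm p := Real.sqrt_nonneg _

lemma nrm_pos {n : ℕ} {q : Fin n → ℝ} (hq : q ≠ 0) : 0 < nrm q := by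
  obtain ⟨i, hi⟩ := Function.ne_iff.mp hq
  exact Real.sqrt_pos.mpr (Finset.sum_pos' (fun j _ => sq_nonneg _)
    ⟨i, Finset.mem_univ i, pow_two_pos_of_ne_zero hi⟩)

lemma inn_le {n : ℕ} (a b : Fin n → ℝ) : inn a b ≤ nrm a * nrm b := by
  have h := Finset.sum_mul_sq_le_sq_mul_sq Finset.univ a b
  have h2 := Real.sqrt_le_sqrt h
  rw [Real.sqrt_mul (by positivity)] at h2
  calc inn a b ≤ |inn a b| := le_abs_self _
    _ = Real.sqrt ((∑ i, a i * b i)^2) := (Real.sqrt_sq_eq_abs _).symm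
    _ ≤ _ := h2

lemma nrm_sub_comm {n : ℕ} (p p' : Fin n → ℝ) : nrm (p - p') = nrm (p' - p) := by
  unfold nrm
  congr 1
  apply Finset.sum_congr rfl
  intro i _
  simp [Pi.sub_apply]
  ring

lemma B_sub_le {n : ℕ} (f : (Fin n → ℝ) → ℝ) (c₁ : ℝ) (hc₁ : 0 < c₁)
    (hlb : ∀ p ∈ Orth n, c₁ * nrm p ≤ f p)
    (p : Fin n → ℝ) (hp : p ∈ Orth n) (p' : Fin n → ℝ) (hp' : p' ∈ Orth n) :
    B f p - B f p' ≤ c₁⁻¹ * nrm (p - p') := by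
  set S : (Fin n → ℝ) → Set ℝ :=
    fun r => {x | ∃ q ∈ Orth n, q ≠ 0 ∧ x = inn r q / f q} with hS
  have hfpos : ∀ q ∈ Orth n, q ≠ 0 → 0 < f q := fun q hq hq0 =>
    lt_of_lt_of_le (mul_pos hc₁ (nrm_pos hq0)) (hlb q hq)
  have hbdd : ∀ r : Fin n → ℝ, BddAbove (S r) := by
    intro r
    refine ⟨c₁⁻¹ * nrm r, ?_⟩
    rintro x ⟨q, hq, hq0, rfl⟩
    have hfq := hfpos q hq hq0
    rw [div_le_iff₀ hfq]
    calc inn r q ≤ nrm r * nrm q := inn_le r q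
      _ = c₁⁻¹ * nrm r * (c₁ * nrm q) := by field_simp
      _ ≤ c₁⁻¹ * nrm r * f q :=
          mul_le_mul_of_nonneg_left (hlb q hq)
            (mul_nonneg (inv_nonneg.mpr hc₁.le) (nrm_nonneg r))
  by_cases hSe : (S p).Nonempty
  · rw [sub_le_iff_le_add]
    apply Real.sSup_le
    · rintro x ⟨q, hq, hq0, rfl⟩
      have hfq := hfpos q hq hq0
      have hmem : inn p' q / f q ≤ B f p' :=
        le_csSup (hbdd p') ⟨q, hq, hq0, rfl⟩
      have key : inn p q / f q ≤ inn p' q / f q + c₁⁻¹ * nrm (p - p') := by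
        have hsplit : inn p q = inn p' q + inn (p - p') q := by
          unfold inn
          rw [← Finset.sum_add_distrib]
          apply Finset.sum_congr rfl
          intro i _
          simp [Pi.sub_apply]
          ring
        rw [hsplit, add_div]
        gcongr
        rw [div_le_iff₀ hfq]
        calc inn (p - p') q ≤ nrm (p - p') * nrm q := inn_le _ _
          _ = c₁⁻¹ * nrm (p - p') * (c₁ * nrm q) := by field_simp
          _ ≤ c₁⁻¹ * nrm (p - p') * f q :=
              mul_le_mul_of_nonneg_left (hlb q hq)
                (mul_nonneg (inv_nonneg.mpr hc₁.le) (nrm_nonneg _))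
      linarith
    · obtain ⟨x, q, hq, hq0, rfl⟩ := hSe
      have hmem : inn p' q / f q ≤ B f p' :=
        le_csSup (hbdd p') ⟨q, hq, hq0, rfl⟩
      have h0 : (0:ℝ) ≤ c₁⁻¹ * nrm (p - p') :=
        mul_nonneg (inv_nonneg.mpr hc₁.le) (nrm_nonneg _)
      have hinn : 0 ≤ inn p' q :=
        Finset.sum_nonneg fun i _ => mul_nonneg (hp' i) (hq i)
      have : 0 ≤ inn p' q / f q := div_nonneg hinn (hfpos q hq hq0).le
      linarith
  · have hSe' : ¬ (S p').Nonempty := by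
      rintro ⟨x, q, hq, hq0, _⟩
      exact hSe ⟨inn p q / f q, q, hq, hq0, rfl⟩
    have h1 : B f p = 0 := by
      rw [Set.not_nonempty_iff_eq_empty] at hSe
      show sSup (S p) = 0
      rw [hSe]; exact Real.sSup_empty
    have h2 : B f p' = 0 := by
      rw [Set.not_nonempty_iff_eq_empty] at hSe'
      show sSup (S p') = 0
      rw [hSe']; exact Real.sSup_empty
    rw [h1, h2, sub_zero]
    exact mul_nonneg (inv_nonneg.mpr hc₁.le) (nrm_nonneg _)

theorem B_lipschitz {n : ℕ} (f : (Fin n → ℝ) → ℝ) (c₁ : ℝ) (hc₁ : 0 < c₁)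
    (hnn : ∀ p ∈ Orth n, 0 ≤ f p)
    (hlb : ∀ p ∈ Orth n, c₁ * nrm p ≤ f p) :
    ∀ p ∈ Orth n, ∀ p' ∈ Orth n, |B f p - B f p'| ≤ c₁⁻¹ * nrm (p - p') := by
  intro p hp p' hp'
  rw [abs_sub_le_iff]
  constructor
  · exact B_sub_le f c₁ hc₁ hlb p hp p' hp'
  · rw [nrm_sub_comm]
    exact B_sub_le f c₁ hc₁ hlb p' hp' p hp
end

section
/- For f ∈ O, f is monotonically increasing (f(p) ≤ f(p+q) for all p, q ∈ ℝⁿ₊) and convex if and only if every strict sublevel set C_f(λ) = {p ∈ ℝⁿ₊ : f(p) < λ}, λ > 0, is positive convex. -/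
open Finset

/-!
If `f` is monotone and convex, the set `U` of points lying strictly below some
point of `C = C_f(λ)` is open (by continuity of `f` it contains `C`), convex, and misses any
`p₀ ∉ C`; a Hahn–Banach functional separating `p₀` from `U` has nonnegative coefficients because
`U` is closed downwards. Conversely, a separating functional with nonnegative coefficients shows
that the complement of a positive convex set is closed upwards, which gives monotonicity, and
convexity of `C_f(1)` together with homogeneity makes `f` subadditive, hence convex.
-/

variable {n : ℕ}

section Orth

theorem zero_mem_orth : (0 : Fin n → ℝ) ∈ Orth n := fun _ => le_rfl

theorem add_mem_orth {p q : Fin n → ℝ} (hp : p ∈ Orth n) (hq : q ∈ Orth n) : p + q ∈ Orth n :=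
  fun i => add_nonneg (hp i) (hq i)

theorem smul_mem_orth {p : Fin n → ℝ} (hp : p ∈ Orth n) {c : ℝ} (hc : 0 ≤ c) : c • p ∈ Orth n :=
  fun i => mul_nonneg hc (hp i)

theorem convex_orth : Convex ℝ (Orth n) :=
  fun _ hp _ hq _ _ ha hb _ => add_mem_orth (smul_mem_orth hp ha) (smul_mem_orth hq hb)

theorem inn_nonneg {p q : Fin n → ℝ} (hp : p ∈ Orth n) (hq : q ∈ Orth n) : 0 ≤ inn p q :=
  Finset.sum_nonneg fun i _ => mul_nonneg (hp i) (hq i)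

theorem inn_add_left (p p' q : Fin n → ℝ) : inn (p + p') q = inn p q + inn p' q := by
  simp only [inn, Pi.add_apply, add_mul, Finset.sum_add_distrib]

theorem inn_coeffs_eq_apply (L : (Fin n → ℝ) →ₗ[ℝ] ℝ) (p : Fin n → ℝ) :
    inn p (fun i => L (Pi.single i 1)) = L p := by
  rw [L.pi_apply_eq_sum_univ p, inn]
  refine Finset.sum_congr rfl fun i _ => ?_
  congr 2
  ext j
  simp [Pi.single_apply, eq_comm]

end Orth

section Separation

def strictLowerHull (C : Set (Fin n → ℝ)) : Set (Fin n → ℝ) :=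
  {x | ∃ p ∈ C, ∀ i, x i < p i}

variable {C : Set (Fin n → ℝ)}

theorem isOpen_strictLowerHull : IsOpen (strictLowerHull C) := by
  have : strictLowerHull C = ⋃ p ∈ C, ⋂ i, {x : Fin n → ℝ | x i < p i} := by
    ext x
    simp [strictLowerHull]
  rw [this]
  exact isOpen_biUnion fun p _ =>
    isOpen_iInter_of_finite fun i => isOpen_lt (continuous_apply i) continuous_const

theorem Convex.strictLowerHull (hC : Convex ℝ C) : Convex ℝ (strictLowerHull C) := by
  refine convex_iff_forall_pos.2 ?_
  rintro x ⟨p, hp, hxp⟩ y ⟨p', hp', hyp'⟩ a b ha hb hab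
  refine ⟨a • p + b • p', hC hp hp' ha.le hb.le hab, fun i => ?_⟩
  simp only [Pi.add_apply, Pi.smul_apply, smul_eq_mul]
  exact add_lt_add (mul_lt_mul_of_pos_left (hxp i) ha) (mul_lt_mul_of_pos_left (hyp' i) hb)

theorem exists_orth_separation (hC : Convex ℝ C) (h0 : 0 ∈ C)
    (hdom : ∀ p ∈ C, ∃ p' ∈ C, ∀ i, p i < p' i) {p₀ : Fin n → ℝ}
    (hp₀ : ∀ p ∈ C, ∃ i, p i ≤ p₀ i) :
    ∃ q ∈ Orth n, ∃ γ : ℝ, 0 < γ ∧ γ ≤ inn p₀ q ∧ ∀ p ∈ C, inn p q < γ := by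
  have hCU : C ⊆ strictLowerHull C := fun p hp => hdom p hp
  have hp₀U : p₀ ∉ strictLowerHull C := by
    rintro ⟨p, hp, hlt⟩
    obtain ⟨i, hi⟩ := hp₀ p hp
    exact (hi.trans_lt (hlt i)).false
  obtain ⟨L, hL⟩ := geometric_hahn_banach_open_point hC.strictLowerHull
    isOpen_strictLowerHull hp₀U
  have hγ : 0 < L p₀ := by simpa using hL 0 (hCU h0)
  obtain ⟨p₁, hp₁, hpos⟩ := hdom 0 h0
  have hq : (fun i => L (Pi.single i 1)) ∈ Orth n := by
    intro i
    by_contra! hneg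
    -- a point `-t • eᵢ` below `0`, with `t` chosen so that `L` equals `L p₀` there
    have hmem : (-(L p₀ / -L (Pi.single i 1))) • (Pi.single i 1 : Fin n → ℝ) ∈
        strictLowerHull C := by
      refine ⟨p₁, hp₁, fun j => lt_of_le_of_lt ?_ (hpos j)⟩
      rcases eq_or_ne j i with rfl | hj
      · simp only [Pi.smul_apply, Pi.single_eq_same, smul_eq_mul, mul_one, Pi.zero_apply]
        exact neg_nonpos.2 (div_nonneg hγ.le (neg_nonneg.2 hneg.le))
      · simp [Pi.single_eq_of_ne hj]
    have := hL _ hmem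
    rw [map_smul, smul_eq_mul] at this
    have hne : L (Pi.single i 1) ≠ 0 := hneg.ne
    field_simp at this
    exact this.false
  refine ⟨_, hq, L p₀, hγ, (inn_coeffs_eq_apply L.toLinearMap p₀).ge, fun p hp => ?_⟩
  exact (inn_coeffs_eq_apply L.toLinearMap p).trans_lt (hL p (hCU hp))

theorem PositiveConvex.add_notMem (hC : PositiveConvex C) {p q : Fin n → ℝ}
    (hp : p ∈ Orth n) (hpC : p ∉ C) (hq : q ∈ Orth n) : p + q ∉ C := by
  intro hpq
  obtain ⟨r, hr, γ, -, hγp, hsep⟩ := hC.2 p hp hpC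
  have := hsep _ hpq
  rw [inn_add_left] at this
  linarith [inn_nonneg hq hr]

end Separation

section Homogeneous

variable {f : (Fin n → ℝ) → ℝ}

theorem MemO.map_zero (hf : MemO f) : f 0 = 0 := by
  have := hf.1 0 zero_mem_orth 2 two_pos
  rw [smul_zero] at this
  linarith

theorem MemO.nonneg (hf : MemO f) {p : Fin n → ℝ} (hp : p ∈ Orth n) : 0 ≤ f p := by
  rcases eq_or_ne p 0 with rfl | h
  · exact hf.map_zero.ge
  · exact (hf.2.1 p hp h).le

theorem exists_mem_sublevel_forall_lt (hf : ContinuousOn f (Orth n)) {p : Fin n → ℝ}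
    (hp : p ∈ Orth n) {l : ℝ} (hpl : f p < l) :
    ∃ p' ∈ {x | x ∈ Orth n ∧ f x < l}, ∀ i, p i < p' i := by
  obtain ⟨ε, hε, hball⟩ := Metric.mem_nhdsWithin_iff.1 ((hf p hp).eventually (gt_mem_nhds hpl))
  have hdist : dist (p + fun _ => ε / 2) p < ε := by
    rw [dist_eq_norm, add_sub_cancel_left]
    calc ‖fun _ : Fin n => ε / 2‖ ≤ ε / 2 :=
          (pi_norm_le_iff_of_nonneg (by positivity)).2 fun _ =>
            (Real.norm_of_nonneg (by positivity)).le
      _ < ε := half_lt_self hε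
  have hmem : (p + fun _ => ε / 2) ∈ Orth n := add_mem_orth hp fun _ => by positivity
  exact ⟨_, ⟨hmem, hball ⟨hdist, hmem⟩⟩, fun i => by simp [hε]⟩

theorem exists_apply_le_of_mem_sublevel {l : ℝ}
    (hmono : ∀ p ∈ Orth n, ∀ q ∈ Orth n, f p ≤ f (p + q)) {p₀ : Fin n → ℝ}
    (hp₀ : p₀ ∈ Orth n) (hl : l ≤ f p₀) :
    ∀ p ∈ {x | x ∈ Orth n ∧ f x < l}, ∃ i, p i ≤ p₀ i := by
  rintro p ⟨-, hpl⟩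
  by_contra! hlt
  have hq : p - p₀ ∈ Orth n := fun i => sub_nonneg.2 (hlt i).le
  have := hmono p₀ hp₀ _ hq
  rw [add_sub_cancel] at this
  linarith

theorem add_le_of_convex_sublevel (hhom : ∀ p ∈ Orth n, ∀ l : ℝ, 0 < l → f (l • p) = l * f p)
    (hnonneg : ∀ p ∈ Orth n, 0 ≤ f p) (hconv : Convex ℝ {x | x ∈ Orth n ∧ f x < 1})
    {p q : Fin n → ℝ} (hp : p ∈ Orth n) (hq : q ∈ Orth n) : f (p + q) ≤ f p + f q := by
  have hscale : ∀ x ∈ Orth n, ∀ c > 0, (c⁻¹ • x ∈ Orth n ∧ f (c⁻¹ • x) < 1) ↔ f x < c :=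
    fun x hx c hc => by
      rw [hhom x hx _ (inv_pos.2 hc), inv_mul_lt_iff₀ hc, mul_one]
      exact and_iff_right (smul_mem_orth hx (inv_nonneg.2 hc.le))
  refine le_of_forall_pos_lt_add fun ε hε => ?_
  set a := f p + ε / 2 with ha_def
  set b := f q + ε / 2 with hb_def
  have ha : 0 < a := by linarith [hnonneg p hp]
  have hb : 0 < b := by linarith [hnonneg q hq]
  have hcomb : (a / (a + b)) • (a⁻¹ • p) + (b / (a + b)) • (b⁻¹ • q) = (a + b)⁻¹ • (p + q) := by
    simp only [smul_smul, smul_add]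
    congr 2 <;> field_simp
  have hmem := hconv ((hscale p hp a ha).2 (by linarith)) ((hscale q hq b hb).2 (by linarith))
    (a := a / (a + b)) (b := b / (a + b)) (by positivity) (by positivity) (by field_simp)
  rw [hcomb] at hmem
  have := (hscale _ (add_mem_orth hp hq) _ (by positivity)).1 hmem
  linarith

theorem convexOn_of_add_le (hhom : ∀ p ∈ Orth n, ∀ l : ℝ, 0 < l → f (l • p) = l * f p)
    (hsub : ∀ p ∈ Orth n, ∀ q ∈ Orth n, f (p + q) ≤ f p + f q) : ConvexOn ℝ (Orth n) f := by
  refine ⟨convex_orth, fun p hp q hq a b ha hb hab => ?_⟩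
  rcases ha.eq_or_lt with rfl | ha
  · simp [(zero_add b).symm.trans hab]
  rcases hb.eq_or_lt with rfl | hb
  · simp [(add_zero a).symm.trans hab]
  calc f (a • p + b • q) ≤ f (a • p) + f (b • q) :=
        hsub _ (smul_mem_orth hp ha.le) _ (smul_mem_orth hq hb.le)
    _ = a • f p + b • f q := by rw [hhom p hp a ha, hhom q hq b hb, smul_eq_mul, smul_eq_mul]

end Homogeneous

theorem mono_convex_iff_positive_convex {n : ℕ} (f : (Fin n → ℝ) → ℝ) (hf : MemO f) :
    ((∀ p ∈ Orth n, ∀ q ∈ Orth n, f p ≤ f (p + q)) ∧ ConvexOn ℝ (Orth n) f) ↔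
      ∀ l : ℝ, 0 < l → PositiveConvex {p | p ∈ Orth n ∧ f p < l} := by
  have hnonneg : ∀ p ∈ Orth n, 0 ≤ f p := fun _ => hf.nonneg
  constructor
  · rintro ⟨hmono, hconv⟩ l hl
    refine ⟨hconv.convex_lt l, fun p₀ hp₀ hp₀C => ?_⟩
    have hl₀ : l ≤ f p₀ := not_lt.1 fun h => hp₀C ⟨hp₀, h⟩
    exact exists_orth_separation (hconv.convex_lt l) ⟨zero_mem_orth, hf.map_zero ▸ hl⟩
      (fun p hp => exists_mem_sublevel_forall_lt hf.2.2.2 hp.1 hp.2)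
      (exists_apply_le_of_mem_sublevel hmono hp₀ hl₀)
  · intro h
    have hmono : ∀ p ∈ Orth n, ∀ q ∈ Orth n, f p ≤ f (p + q) := fun p hp q hq =>
      not_lt.1 fun hlt => (h _ ((hnonneg _ (add_mem_orth hp hq)).trans_lt hlt)).add_notMem hp
        (fun hpC => hpC.2.false) hq ⟨add_mem_orth hp hq, hlt⟩
    exact ⟨hmono, convexOn_of_add_le hf.1 fun p hp q hq =>
      add_le_of_convex_sublevel hf.1 hnonneg (h 1 one_pos).1 hp hq⟩
end

section
/- Duality between weighted independence and fractional packing numbers: for a finite simple graph G with complement Ḡ and any nonzero weight p : V(G) → ℝ₊, α*_G(p) = sup_{w ≠ 0} ⟨p,w⟩ / α_{Ḡ}(w), where the supremum is over nonzero nonnegative weights w. -/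
open Finset

def IndepSet {V : Type*} [Fintype V] [DecidableEq V] (G : SimpleGraph V)
    (I : Finset V) : Prop :=
  ∀ u ∈ I, ∀ v ∈ I, u ≠ v → ¬ G.Adj u v

def IsClique' {V : Type*} [Fintype V] [DecidableEq V] (G : SimpleGraph V)
    (C : Finset V) : Prop :=
  ∀ u ∈ C, ∀ v ∈ C, u ≠ v → G.Adj u v

noncomputable def alphaW {V : Type*} [Fintype V] [DecidableEq V]
    (G : SimpleGraph V) (p : V → ℝ) : ℝ :=
  sSup {x | ∃ I : Finset V, IndepSet G I ∧ x = ∑ v ∈ I, p v}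

noncomputable def alphaStarW {V : Type*} [Fintype V] [DecidableEq V]
    (G : SimpleGraph V) (p : V → ℝ) : ℝ :=
  sSup {x | ∃ q : V → ℝ, (∀ v, 0 ≤ q v ∧ q v ≤ 1) ∧
      (∀ C : Finset V, IsClique' G C → ∑ v ∈ C, q v ≤ 1) ∧ x = ∑ v, p v * q v}

section Aux

variable {V : Type*} [Fintype V] [DecidableEq V] (G : SimpleGraph V)

lemma indepSet_singleton (v : V) : IndepSet G {v} := by
  intro a ha b hb hab
  simp only [Finset.mem_singleton] at ha hb
  subst ha; subst hb; exact absurd rfl hab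

lemma indepSet_compl_iff (I : Finset V) : IndepSet Gᶜ I ↔ IsClique' G I := by
  constructor
  · intro h u hu v hv huv
    by_contra hadj
    exact h u hu v hv huv ⟨huv, hadj⟩
  · intro h u hu v hv huv hadj
    exact hadj.2 (h u hu v hv huv)

lemma alphaW_bddAbove {w : V → ℝ} (hw : ∀ v, 0 ≤ w v) :
    BddAbove {x | ∃ I : Finset V, IndepSet G I ∧ x = ∑ v ∈ I, w v} := by
  refine ⟨∑ v, w v, ?_⟩
  rintro x ⟨I, _, rfl⟩
  exact Finset.sum_le_sum_of_subset_of_nonneg I.subset_univ (fun v _ _ => hw v)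

lemma le_alphaW {w : V → ℝ} (hw : ∀ v, 0 ≤ w v) {I : Finset V}
    (hI : IndepSet G I) : ∑ v ∈ I, w v ≤ alphaW G w :=
  le_csSup (alphaW_bddAbove G hw) ⟨I, hI, rfl⟩

lemma alphaW_pos {w : V → ℝ} (hw : ∀ v, 0 ≤ w v) (hw0 : w ≠ 0) :
    0 < alphaW G w := by
  obtain ⟨v, hv⟩ := Function.ne_iff.mp hw0
  have h1 : (0:ℝ) < w v := lt_of_le_of_ne (hw v) (Ne.symm hv)
  calc (0:ℝ) < w v := h1
    _ = ∑ u ∈ {v}, w u := by simp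
    _ ≤ alphaW G w := le_alphaW G hw (indepSet_singleton G v)

end Aux

theorem alphaStar_dual {V : Type*} [Fintype V] [DecidableEq V]
    (G : SimpleGraph V) (p : V → ℝ) (hp : ∀ v, 0 ≤ p v) (hp0 : p ≠ 0) :
    alphaStarW G p = sSup {x | ∃ w : V → ℝ, (∀ v, 0 ≤ w v) ∧ w ≠ 0 ∧
      x = (∑ v, p v * w v) / alphaW Gᶜ w} := by
  classical
  set S := {x | ∃ q : V → ℝ, (∀ v, 0 ≤ q v ∧ q v ≤ 1) ∧
      (∀ C : Finset V, IsClique' G C → ∑ v ∈ C, q v ≤ 1) ∧ x = ∑ v, p v * q v}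
    with hSdef
  set T := {x | ∃ w : V → ℝ, (∀ v, 0 ≤ w v) ∧ w ≠ 0 ∧
      x = (∑ v, p v * w v) / alphaW Gᶜ w} with hTdef
  have hSbdd : BddAbove S := by
    refine ⟨∑ v, p v, ?_⟩
    rintro x ⟨q, hq, _, rfl⟩
    calc ∑ v, p v * q v ≤ ∑ v, p v * 1 :=
          Finset.sum_le_sum fun v _ =>
            mul_le_mul_of_nonneg_left (hq v).2 (hp v)
      _ = ∑ v, p v := by simp
  have hTS : T ⊆ S := by
    rintro x ⟨w, hw, hw0, rfl⟩
    have hM : 0 < alphaW Gᶜ w := alphaW_pos Gᶜ hw hw0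
    refine ⟨fun v => w v / alphaW Gᶜ w, ?_, ?_, ?_⟩
    · intro v
      refine ⟨div_nonneg (hw v) hM.le, ?_⟩
      rw [div_le_one hM]
      calc w v = ∑ u ∈ {v}, w u := by simp
        _ ≤ alphaW Gᶜ w := le_alphaW Gᶜ hw (indepSet_singleton Gᶜ v)
    · intro C hC
      rw [← Finset.sum_div, div_le_one hM]
      exact le_alphaW Gᶜ hw ((indepSet_compl_iff G C).mpr hC)
    · rw [Finset.sum_div]
      exact Finset.sum_congr rfl fun v _ => mul_div_assoc _ _ _
  have hTne : T.Nonempty := by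
    obtain ⟨v0, hv0⟩ := Function.ne_iff.mp hp0
    refine ⟨_, fun _ => (1:ℝ), fun _ => zero_le_one, ?_, rfl⟩
    intro h
    exact one_ne_zero (congrFun h v0)
  have hTbdd : BddAbove T := hSbdd.mono hTS
  apply le_antisymm
  · refine csSup_le ⟨0, 0, by simp, by simp, by simp⟩ ?_
    rintro x ⟨q, hq, hqC, rfl⟩
    by_cases hq0 : q = 0
    · subst hq0
      simp only [Pi.zero_apply, mul_zero, Finset.sum_const_zero]
      obtain ⟨y, hyT⟩ := hTne
      obtain ⟨w, hw, hw0, hy⟩ := hyT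
      have hy0 : 0 ≤ y := by
        rw [hy]
        exact div_nonneg (Finset.sum_nonneg fun v _ => mul_nonneg (hp v) (hw v))
          (alphaW_pos Gᶜ hw hw0).le
      exact le_trans hy0 (le_csSup hTbdd ⟨w, hw, hw0, hy⟩)
    · have hqn : ∀ v, 0 ≤ q v := fun v => (hq v).1
      have hM : 0 < alphaW Gᶜ q := alphaW_pos Gᶜ hqn hq0
      have hM1 : alphaW Gᶜ q ≤ 1 := by
        refine csSup_le ⟨0, ∅, fun u hu => absurd hu (by simp), by simp⟩ ?_
        rintro x ⟨I, hI, rfl⟩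
        exact hqC I ((indepSet_compl_iff G I).mp hI)
      have hx0 : 0 ≤ ∑ v, p v * q v :=
        Finset.sum_nonneg fun v _ => mul_nonneg (hp v) (hqn v)
      have hxy : ∑ v, p v * q v ≤ (∑ v, p v * q v) / alphaW Gᶜ q := by
        rw [le_div_iff₀ hM]
        exact mul_le_of_le_one_right hx0 hM1
      exact le_trans hxy (le_csSup hTbdd ⟨q, hqn, hq0, rfl⟩)
  · exact csSup_le_csSup hSbdd hTne hTS
end
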